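/- Define f_0, f_1 : ℝ → ℝ by f_0(x) = |3x − 1| and f_1(x) = |3x − 2|, and for n ≥ 1 let E_n : ℝ → ℝ be the lower envelope E_n(x) = min_{σ ∈ {0,1}^n} f_σ(x) over all 2^n compositions. Then E_n is piecewise linear with at least 2^n pieces, i.e., p(E_n) ≥ 2^n. -/

import Mathlib

/-- `f : ℝ → ℝ` is piecewise linear with at most `k` pieces: there are
breakpoints `c 0 ≤ c 1 ≤ … ≤ c (k-2)` such that on each of the `k` intervals
`(-∞, c 0], [c 0, c 1], …, [c (k-2), ∞)` the function `f` agrees with some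
affine function `x ↦ a * x + b`. -/
def PiecewiseAffineWith (f : ℝ → ℝ) (k : ℕ) : Prop :=
  0 < k ∧ ∃ c : Fin (k - 1) → ℝ, Monotone c ∧
    ∀ j : Fin k, ∃ a b : ℝ, ∀ y : ℝ,
      (∀ i : Fin (k - 1), (i : ℕ) < (j : ℕ) → c i ≤ y) →
      (∀ i : Fin (k - 1), (j : ℕ) ≤ (i : ℕ) → y ≤ c i) →
      f y = a * y + b

/-- `p(f)`: the least `k` such that `f` is piecewise linear with at most `k` pieces. -/
noncomputable def nPieces (f : ℝ → ℝ) : ℕ := sInf {k | PiecewiseAffineWith f k}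

/-- The tent-like piecewise linear function `f₀ x = |3x - 1|`. -/
noncomputable def f₀ (x : ℝ) : ℝ := |3 * x - 1|

/-- The tent-like piecewise linear function `f₁ x = |3x - 2|`. -/
noncomputable def f₁ (x : ℝ) : ℝ := |3 * x - 2|

/-- For a bit string `σ = σ₁ ⋯ σₙ` (as a list of booleans, `false ↦ f₀`,
`true ↦ f₁`), the composition `f_σ = f_{σₙ} ∘ ⋯ ∘ f_{σ₁}`: the innermost
function corresponds to the first bit. -/
noncomputable def bitComp (f0 f1 : ℝ → ℝ) (l : List Bool) : ℝ → ℝ :=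
  fun x => l.foldl (fun y b => (if b then f1 else f0) y) x

/-- The lower envelope `E_n x = min_{σ ∈ {0,1}ⁿ} f_σ x` of all `2ⁿ`
compositions of `f₀`, `f₁`. -/
noncomputable def lowerEnvelope (n : ℕ) : ℝ → ℝ :=
  fun x => Finset.univ.inf' (Finset.univ_nonempty (α := Fin n → Bool))
    (fun σ : Fin n → Bool => bitComp f₀ f₁ (List.ofFn σ) x)

/-!
Let `Sₙ` (`reducedNumerators n`) be the set of integers `0 < j < 3ⁿ` with `3 ∤ j`. Then
`Eₙ x = dist (3ⁿ x, Sₙ)`: every `j / 3ⁿ` with `j ∈ Sₙ` is a zero of some `f_σ`, which is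
`3ⁿ`-Lipschitz; conversely `f_{bσ} x = f_σ |3x - c| ≥ dist (3ⁿ |3x - c|, Sₙ) ≥ dist (3ⁿ⁺¹ x, Sₙ₊₁)`
because `c 3ⁿ ± j ∈ Sₙ₊₁`. The distance to a finite set of integers is affine between consecutive
half-integers, so `Eₙ` is piecewise linear. Each of the `2 · 3ⁿ⁻¹` points of `Sₙ / 3ⁿ` is a strict
local minimum of `Eₙ`, hence a breakpoint of every piecewise-linear presentation, so
`p(Eₙ) > 2 · 3ⁿ⁻¹ ≥ 2ⁿ`.
-/

open Metric Set Filter Topology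

def IsAffineOn (f : ℝ → ℝ) (s : Set ℝ) : Prop :=
  ∃ a b : ℝ, ∀ y ∈ s, f y = a * y + b

lemma IsAffineOn.comp_mul_left {g : ℝ → ℝ} {s t : Set ℝ} (hg : IsAffineOn g t) (r : ℝ)
    (hst : MapsTo (r * ·) s t) : IsAffineOn (fun y => g (r * y)) s := by
  obtain ⟨a, b, hab⟩ := hg
  exact ⟨a * r, b, fun y hy => (hab _ (hst hy)).trans (by ring)⟩

lemma piecewiseAffineWith_of_isAffineOn {f : ℝ → ℝ} {c : ℕ → ℝ} (hc : Monotone c) (N : ℕ)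
    (hleft : IsAffineOn f (Iic (c 0))) (hright : IsAffineOn f (Ici (c N)))
    (hcell : ∀ i < N, IsAffineOn f (Icc (c i) (c (i + 1)))) :
    PiecewiseAffineWith f (N + 2) := by
  refine ⟨by omega, fun i => c i, fun i j hij => hc hij, fun ⟨j, hj⟩ => ?_⟩
  rcases j with _ | j
  · obtain ⟨a, b, hab⟩ := hleft
    exact ⟨a, b, fun y _ hy => hab y (hy ⟨0, by omega⟩ le_rfl)⟩
  rcases (by omega : j ≤ N).lt_or_eq with hjN | rfl
  · obtain ⟨a, b, hab⟩ := hcell j hjN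
    exact ⟨a, b, fun y hlo hhi =>
      hab y ⟨hlo ⟨j, by omega⟩ (Nat.lt_succ_self j), hhi ⟨j + 1, by omega⟩ le_rfl⟩⟩
  · obtain ⟨a, b, hab⟩ := hright
    exact ⟨a, b, fun y hy _ => hab y (hy ⟨j, by omega⟩ (Nat.lt_succ_self j))⟩

lemma Monotone.lt_card_filter_lt_iff {α : Type*} [LinearOrder α] {m : ℕ} {c : Fin m → α}
    (hc : Monotone c) (z : α) (i : Fin m) :
    (i : ℕ) < (Finset.univ.filter fun i' => c i' < z).card ↔ c i < z := by
  constructor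
  · intro hi
    by_contra hzi
    have hsub : (Finset.univ.filter fun i' => c i' < z) ⊆ Finset.Iio i := fun i' hi' => by
      simp only [Finset.mem_filter, Finset.mem_univ, true_and] at hi'
      exact Finset.mem_Iio.mpr (hc.reflect_lt (hi'.trans_le (not_lt.mp hzi)))
    have := (Finset.card_le_card hsub).trans_eq (Fin.card_Iio i)
    omega
  · intro hi
    have hsub : Finset.Iic i ⊆ Finset.univ.filter fun i' => c i' < z := fun i' hi' => by
      simp only [Finset.mem_filter, Finset.mem_univ, true_and]
      exact (hc (Finset.mem_Iic.mp hi')).trans_lt hi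
    simpa [Fin.card_Iic] using Finset.card_le_card hsub

lemma PiecewiseAffineWith.exists_breakpoints {f : ℝ → ℝ} {k : ℕ}
    (hf : PiecewiseAffineWith f k) : ∃ c : Fin (k - 1) → ℝ,
      ∀ z ∉ range c, ∃ a b : ℝ, ∀ᶠ y in 𝓝 z, f y = a * y + b := by
  obtain ⟨hk, c, hc, hpieces⟩ := hf
  refine ⟨c, fun z hz => ?_⟩
  have hjk : (Finset.univ.filter fun i => c i < z).card < k :=
    (Finset.card_filter_le _ _).trans_lt (by simp only [Finset.card_univ, Fintype.card_fin]; omega)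
  obtain ⟨a, b, hab⟩ := hpieces ⟨_, hjk⟩
  have hnear : ∀ᶠ y in 𝓝 z, ∀ i, (c i < z → c i ≤ y) ∧ (z < c i → y ≤ c i) :=
    eventually_all.mpr fun i =>
      (eventually_imp_distrib_left.mpr eventually_ge_nhds).and
        (eventually_imp_distrib_left.mpr eventually_le_nhds)
  refine ⟨a, b, ?_⟩
  filter_upwards [hnear] with y hy
  refine hab y (fun i hi => (hy i).1 ((hc.lt_card_filter_lt_iff z i).mp hi))
    (fun i hi => (hy i).2 ?_)
  rw [← not_lt, hc.lt_card_filter_lt_iff] at hi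
  exact (not_lt.mp hi).lt_of_ne fun h => hz ⟨i, h.symm⟩

def IsStrictLocalMin {X : Type*} [TopologicalSpace X] (f : X → ℝ) (z : X) : Prop :=
  ∀ᶠ x in 𝓝[≠] z, f z < f x

lemma IsStrictLocalMin.not_eventually_affine {f : ℝ → ℝ} {z : ℝ} (hmin : IsStrictLocalMin f z)
    (a b : ℝ) : ¬ ∀ᶠ y in 𝓝 z, f y = a * y + b := by
  intro haff
  have h : ∀ᶠ y in 𝓝[≠] z, a * z < a * y := by
    filter_upwards [hmin, nhdsWithin_le_nhds haff] with y hzy hy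
    linarith [haff.self_of_nhds]
  obtain ⟨y₁, hy₁, hz₁⟩ := ((h.filter_mono (nhdsGT_le_nhdsNE z)).and self_mem_nhdsWithin).exists
  obtain ⟨y₂, hy₂, hz₂⟩ := ((h.filter_mono (nhdsLT_le_nhdsNE z)).and self_mem_nhdsWithin).exists
  nlinarith [show z < y₁ from hz₁, show y₂ < z from hz₂]

lemma PiecewiseAffineWith.card_lt {f : ℝ → ℝ} {k : ℕ} (hf : PiecewiseAffineWith f k)
    (s : Finset ℝ) (hs : ∀ z ∈ s, IsStrictLocalMin f z) : s.card < k := by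
  obtain ⟨c, hc⟩ := hf.exists_breakpoints
  have hsub : s ⊆ Finset.univ.image c := fun z hz => by
    by_contra hzc
    obtain ⟨a, b, hab⟩ := hc z (by simpa using hzc)
    exact (hs z hz).not_eventually_affine a b hab
  have := (Finset.card_le_card hsub).trans Finset.card_image_le
  simp only [Finset.card_univ, Fintype.card_fin] at this
  have := hf.1
  omega

lemma isStrictLocalMin_of_finite_zeros {X : Type*} [TopologicalSpace X] [T1Space X]
    {f : X → ℝ} (hf : ∀ x, 0 ≤ f x) (hfin : {x | f x = 0}.Finite) {z : X} (hz : f z = 0) :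
    IsStrictLocalMin f z := by
  filter_upwards [nhdsNE_le_cofinite z hfin.compl_mem_cofinite] with x hx
  exact hz ▸ (hf x).lt_of_ne' hx

lemma infDist_isAffineOn_of_forall_abs_sub_le {S I : Set ℝ} {s₀ : ℝ} (hs₀ : s₀ ∈ S)
    (hmin : ∀ a ∈ I, ∀ s ∈ S, |a - s₀| ≤ |a - s|)
    (hside : (∀ a ∈ I, s₀ ≤ a) ∨ (∀ a ∈ I, a ≤ s₀)) : IsAffineOn (infDist · S) I := by
  have heq : ∀ a ∈ I, infDist a S = |a - s₀| := fun a ha =>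
    le_antisymm ((infDist_le_dist_of_mem hs₀).trans_eq (Real.dist_eq a s₀))
      ((le_infDist ⟨s₀, hs₀⟩).mpr fun s hs => (hmin a ha s hs).trans_eq (Real.dist_eq a s).symm)
  rcases hside with h | h
  · refine ⟨1, -s₀, fun a ha => ?_⟩
    beta_reduce
    rw [heq a ha, abs_of_nonneg (sub_nonneg.mpr (h a ha))]
    ring
  · refine ⟨-1, s₀, fun a ha => ?_⟩
    beta_reduce
    rw [heq a ha, abs_of_nonpos (sub_nonpos.mpr (h a ha))]
    ring

lemma infDist_isAffineOn_Iic {S : Set ℝ} {s₀ : ℝ} (hs₀ : s₀ ∈ S) (h : ∀ s ∈ S, s₀ ≤ s) :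
    IsAffineOn (infDist · S) (Iic s₀) :=
  infDist_isAffineOn_of_forall_abs_sub_le hs₀ (fun a ha s hs => by
    rw [abs_of_nonpos (sub_nonpos.mpr ha), abs_of_nonpos (by linarith [h s hs, mem_Iic.mp ha])]
    linarith [h s hs]) (Or.inr fun _ => id)

lemma infDist_isAffineOn_Ici {S : Set ℝ} {s₀ : ℝ} (hs₀ : s₀ ∈ S) (h : ∀ s ∈ S, s ≤ s₀) :
    IsAffineOn (infDist · S) (Ici s₀) :=
  infDist_isAffineOn_of_forall_abs_sub_le hs₀ (fun a ha s hs => by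
    rw [abs_of_nonneg (sub_nonneg.mpr ha), abs_of_nonneg (by linarith [h s hs, mem_Ici.mp ha])]
    linarith [h s hs]) (Or.inl fun _ => id)

/-- Two integers `p, q` are equidistant from `a` only if `2a = p + q` is an integer; hence on a
half-integer cell, comparing `|a - p|` with `|a - q|` at the midpoint decides it everywhere. -/
lemma abs_sub_le_abs_sub_of_mem_halfCell {t p q : ℤ} {a : ℝ}
    (ha : a ∈ Icc ((t : ℝ) / 2) ((t + 1) / 2))
    (hmid : |(2 * t + 1) / 4 - (p : ℝ)| ≤ |(2 * t + 1) / 4 - (q : ℝ)|) :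
    |a - p| ≤ |a - q| := by
  rw [← sq_le_sq, ← sub_nonneg] at hmid ⊢
  have hfactor : ∀ x : ℝ, (x - q) ^ 2 - (x - p) ^ 2 = (p - q) * (2 * x - (p + q)) := fun x => by
    ring
  rw [hfactor] at hmid ⊢
  obtain ⟨ha₁, ha₂⟩ := ha
  rcases le_or_gt (p + q) t with hpq | hpq
  · have hpq' : ((p + q : ℤ) : ℝ) ≤ t := by exact_mod_cast hpq
    push_cast at hpq'
    have : 0 ≤ (p : ℝ) - q := nonneg_of_mul_nonneg_left hmid (by linarith)
    exact mul_nonneg this (by linarith)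
  · have hpq' : (t : ℝ) + 1 ≤ ((p + q : ℤ) : ℝ) := by exact_mod_cast hpq
    push_cast at hpq'
    have : (p : ℝ) - q ≤ 0 := nonpos_of_mul_nonneg_left hmid (by linarith)
    exact mul_nonneg_of_nonpos_of_nonpos this (by linarith)

lemma infDist_isAffineOn_halfCell {S : Set ℝ} (hS : S.Finite) (hne : S.Nonempty)
    (hZ : S ⊆ range ((↑) : ℤ → ℝ)) (t : ℤ) :
    IsAffineOn (infDist · S) (Icc ((t : ℝ) / 2) ((t + 1) / 2)) := by
  obtain ⟨s₀, hs₀, hmin⟩ := S.exists_min_image (fun s => |(2 * t + 1) / 4 - s|) hS hne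
  obtain ⟨p, rfl⟩ := hZ hs₀
  refine infDist_isAffineOn_of_forall_abs_sub_le hs₀ (fun a ha s hs => ?_) ?_
  · obtain ⟨q, rfl⟩ := hZ hs
    exact abs_sub_le_abs_sub_of_mem_halfCell ha (hmin _ hs)
  · rcases le_or_gt (2 * p) t with hp | hp
    · have : 2 * (p : ℝ) ≤ t := by exact_mod_cast hp
      exact Or.inl fun a ha => by linarith [ha.1]
    · have : (t : ℝ) + 1 ≤ 2 * p := by exact_mod_cast hp
      exact Or.inr fun a ha => by linarith [ha.2]

def reducedNumerators (n : ℕ) : Set ℤ := {j | 0 < j ∧ j < 3 ^ n ∧ ¬ 3 ∣ j}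

lemma three_pow_eq_three_mul {n : ℕ} (hn : 1 ≤ n) : (3 : ℤ) ^ n = 3 * 3 ^ (n - 1) := by
  rw [← pow_succ', Nat.sub_add_cancel hn]

lemma one_mem_reducedNumerators {n : ℕ} (hn : 1 ≤ n) : (1 : ℤ) ∈ reducedNumerators n :=
  ⟨one_pos, one_lt_pow₀ (by norm_num) (by omega), by norm_num⟩

lemma three_pow_sub_one_mem_reducedNumerators {n : ℕ} (hn : 1 ≤ n) :
    3 ^ n - 1 ∈ reducedNumerators n := by
  have := three_pow_eq_three_mul hn
  have : (0 : ℤ) < 3 ^ (n - 1) := by positivity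
  refine ⟨?_, ?_, ?_⟩ <;> omega

lemma cond_mem_reducedNumerators_one (b : Bool) : cond b (2 : ℤ) 1 ∈ reducedNumerators 1 := by
  cases b <;> simp [reducedNumerators]

/-- `i ↦ i + ⌊i / 2⌋ + 1` enumerates `1, 2, 4, 5, 7, 8, …`, the positive integers prime to `3`. -/
lemma natCast_mem_reducedNumerators {n i : ℕ} (hn : 1 ≤ n) (hi : i < 2 * 3 ^ (n - 1)) :
    ((i + i / 2 + 1 : ℕ) : ℤ) ∈ reducedNumerators n := by
  have := three_pow_eq_three_mul hn
  have hi' : (i : ℤ) < 2 * 3 ^ (n - 1) := by exact_mod_cast hi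
  simp only [reducedNumerators, mem_ofPred_eq]
  omega

lemma add_mem_reducedNumerators_succ {m : ℕ} (hm : 1 ≤ m) {c j : ℤ} (hc : c = 1 ∨ c = 2)
    (hj : j ∈ reducedNumerators m) :
    c * 3 ^ m + j ∈ reducedNumerators (m + 1) ∧ c * 3 ^ m - j ∈ reducedNumerators (m + 1) := by
  obtain ⟨h0, h1, h3⟩ := hj
  have := three_pow_eq_three_mul hm
  simp only [reducedNumerators, mem_ofPred_eq, pow_succ]
  rcases hc with rfl | rfl <;> omega

lemma exists_of_mem_reducedNumerators_succ {m : ℕ} (hm : 1 ≤ m) {j : ℤ}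
    (hj : j ∈ reducedNumerators (m + 1)) :
    ∃ c : ℤ, (c = 1 ∨ c = 2) ∧ ∃ i ∈ reducedNumerators m, |j - c * 3 ^ m| = i := by
  obtain ⟨h0, h1, h3⟩ := hj
  have := three_pow_eq_three_mul hm
  rw [pow_succ] at h1
  simp only [reducedNumerators, mem_ofPred_eq]
  rcases lt_or_ge j (3 ^ m) with hj₁ | hj₁
  · exact ⟨1, Or.inl rfl, 3 ^ m - j, by omega, by rw [abs_of_neg (by omega)]; ring⟩
  rcases lt_or_ge j (2 * 3 ^ m) with hj₂ | hj₂
  · exact ⟨1, Or.inl rfl, j - 3 ^ m, by omega, by rw [abs_of_nonneg (by omega)]; ring⟩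
  · exact ⟨2, Or.inr rfl, j - 2 * 3 ^ m, by omega, abs_of_nonneg (by omega)⟩

lemma finite_reducedNumerators (n : ℕ) : ((↑) '' reducedNumerators n : Set ℝ).Finite :=
  ((finite_Ioo (0 : ℤ) (3 ^ n)).subset fun _ hj => ⟨hj.1, hj.2.1⟩).image _

lemma image_reducedNumerators_nonempty {n : ℕ} (hn : 1 ≤ n) :
    ((↑) '' reducedNumerators n : Set ℝ).Nonempty :=
  ⟨1, 1, one_mem_reducedNumerators hn, Int.cast_one⟩

lemma bitComp_cons (b : Bool) (l : List Bool) (x : ℝ) :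
    bitComp f₀ f₁ (b :: l) x = bitComp f₀ f₁ l ((if b then f₁ else f₀) x) := rfl

lemma ite_f₁_f₀_apply (b : Bool) (x : ℝ) :
    (if b then f₁ else f₀) x = |3 * x - ((cond b 2 1 : ℤ) : ℝ)| := by
  cases b <;> simp [f₀, f₁]

lemma cond_two_one_eq (b : Bool) : cond b (2 : ℤ) 1 = 1 ∨ cond b (2 : ℤ) 1 = 2 := by
  cases b <;> simp

lemma abs_bitComp_sub_le (l : List Bool) (x y : ℝ) :
    |bitComp f₀ f₁ l x - bitComp f₀ f₁ l y| ≤ 3 ^ l.length * |x - y| := by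
  induction l generalizing x y with
  | nil => simp [bitComp]
  | cons b l ih =>
    rw [bitComp_cons, bitComp_cons, List.length_cons, pow_succ, mul_assoc]
    refine (ih _ _).trans (mul_le_mul_of_nonneg_left ?_ (by positivity))
    rw [ite_f₁_f₀_apply, ite_f₁_f₀_apply]
    calc _ ≤ |3 * x - _ - (3 * y - _)| := abs_abs_sub_abs_le_abs_sub _ _
      _ = 3 * |x - y| := by
        rw [show 3 * x - _ - (3 * y - _) = 3 * (x - y) by ring, abs_mul, abs_of_pos three_pos]

lemma exists_bitComp_eq_zero {n : ℕ} (hn : 1 ≤ n) {j : ℤ} (hj : j ∈ reducedNumerators n) :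
    ∃ l : List Bool, l.length = n ∧ bitComp f₀ f₁ l (j / 3 ^ n) = 0 := by
  induction n, hn using Nat.le_induction generalizing j with
  | base =>
    obtain ⟨h0, h1, h3⟩ := hj
    obtain rfl | rfl : j = 1 ∨ j = 2 := by omega
    exacts [⟨[false], rfl, by norm_num [bitComp, f₀]⟩, ⟨[true], rfl, by norm_num [bitComp, f₁]⟩]
  | succ m hm ih =>
    obtain ⟨c, hc, i, hi, hji⟩ := exists_of_mem_reducedNumerators_succ hm hj
    obtain ⟨l, hl, hzero⟩ := ih hi
    obtain ⟨b, rfl⟩ : ∃ b : Bool, cond b 2 1 = c := by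
      rcases hc with rfl | rfl
      exacts [⟨false, rfl⟩, ⟨true, rfl⟩]
    refine ⟨b :: l, by simp [hl], ?_⟩
    have hji' : |(j : ℝ) - ((cond b 2 1 : ℤ) : ℝ) * 3 ^ m| = i := by exact_mod_cast hji
    have hstep : 3 * ((j : ℝ) / 3 ^ (m + 1)) - ((cond b 2 1 : ℤ) : ℝ) =
        (j - ((cond b 2 1 : ℤ) : ℝ) * 3 ^ m) / 3 ^ m := by
      field_simp
      ring
    rw [bitComp_cons, ite_f₁_f₀_apply, hstep, abs_div, hji', abs_of_pos (by positivity), hzero]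

lemma infDist_le_infDist_bitStep {m : ℕ} (hm : 1 ≤ m) (b : Bool) (y : ℝ) :
    infDist (3 ^ (m + 1) * y) ((↑) '' reducedNumerators (m + 1)) ≤
      infDist (3 ^ m * (if b then f₁ else f₀) y) ((↑) '' reducedNumerators m) := by
  refine (le_infDist (image_reducedNumerators_nonempty hm)).mpr ?_
  rintro _ ⟨i, hi, rfl⟩
  obtain ⟨hadd, hsub⟩ := add_mem_reducedNumerators_succ hm (cond_two_one_eq b) hi
  rw [ite_f₁_f₀_apply, Real.dist_eq]
  rcases le_total 0 (3 * y - ((cond b 2 1 : ℤ) : ℝ)) with h | h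
  · refine (infDist_le_dist_of_mem (mem_image_of_mem _ hadd)).trans_eq ?_
    rw [abs_of_nonneg h, Real.dist_eq]
    push_cast
    ring_nf
  · refine (infDist_le_dist_of_mem (mem_image_of_mem _ hsub)).trans_eq ?_
    rw [abs_of_nonpos h, Real.dist_eq, ← abs_neg]
    push_cast
    ring_nf

lemma infDist_le_bitComp (l : List Bool) (hl : l ≠ []) (y : ℝ) :
    infDist (3 ^ l.length * y) ((↑) '' reducedNumerators l.length) ≤ bitComp f₀ f₁ l y := by
  induction l generalizing y with
  | nil => exact absurd rfl hl
  | cons b l ih =>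
    rw [bitComp_cons, List.length_cons]
    rcases eq_or_ne l [] with rfl | hl'
    · refine (infDist_le_dist_of_mem
        (mem_image_of_mem _ (cond_mem_reducedNumerators_one b))).trans_eq ?_
      rw [ite_f₁_f₀_apply, Real.dist_eq]
      simp [bitComp]
    · exact (infDist_le_infDist_bitStep (List.length_pos_iff.mpr hl') b y).trans (ih hl' _)

lemma lowerEnvelope_le_bitComp {n : ℕ} (l : List Bool) (hl : l.length = n) (y : ℝ) :
    lowerEnvelope n y ≤ bitComp f₀ f₁ l y := by
  subst hl
  have := Finset.inf'_le (fun σ : Fin l.length → Bool => bitComp f₀ f₁ (List.ofFn σ) y)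
    (Finset.mem_univ l.get)
  rwa [List.ofFn_get] at this

lemma exists_bitComp_eq_lowerEnvelope (n : ℕ) (y : ℝ) :
    ∃ l : List Bool, l.length = n ∧ bitComp f₀ f₁ l y = lowerEnvelope n y := by
  obtain ⟨σ, -, hσ⟩ := Finset.exists_mem_eq_inf' (Finset.univ_nonempty (α := Fin n → Bool))
    (fun σ : Fin n → Bool => bitComp f₀ f₁ (List.ofFn σ) y)
  exact ⟨List.ofFn σ, List.length_ofFn, hσ.symm⟩

theorem lowerEnvelope_eq_infDist {n : ℕ} (hn : 1 ≤ n) (y : ℝ) :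
    lowerEnvelope n y = infDist (3 ^ n * y) ((↑) '' reducedNumerators n) := by
  refine le_antisymm ((le_infDist (image_reducedNumerators_nonempty hn)).mpr ?_) ?_
  · rintro _ ⟨j, hj, rfl⟩
    obtain ⟨l, hl, hzero⟩ := exists_bitComp_eq_zero hn hj
    have hpos : (0 : ℝ) < 3 ^ n := by positivity
    calc lowerEnvelope n y ≤ bitComp f₀ f₁ l y := lowerEnvelope_le_bitComp l hl y
      _ ≤ bitComp f₀ f₁ l (j / 3 ^ n) + 3 ^ n * |y - j / 3 ^ n| := by
        have := abs_bitComp_sub_le l y (j / 3 ^ n)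
        rw [hl] at this
        linarith [le_abs_self (bitComp f₀ f₁ l y - bitComp f₀ f₁ l (j / 3 ^ n))]
      _ = dist (3 ^ n * y) j := by
        rw [hzero, zero_add, Real.dist_eq, show 3 ^ n * y - j = 3 ^ n * (y - j / 3 ^ n) by
          field_simp, abs_mul, abs_of_pos hpos]
  · obtain ⟨l, rfl, hl⟩ := exists_bitComp_eq_lowerEnvelope n y
    exact hl ▸ infDist_le_bitComp l (List.ne_nil_of_length_pos hn) y

lemma lowerEnvelope_piecewiseAffineWith {n : ℕ} (hn : 1 ≤ n) :
    PiecewiseAffineWith (lowerEnvelope n) (2 * 3 ^ n + 2) := by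
  set S : Set ℝ := (↑) '' reducedNumerators n
  have hbounds : ∀ s ∈ S, 1 ≤ s ∧ s ≤ 3 ^ n - 1 := by
    rintro _ ⟨j, ⟨h0, h1, -⟩, rfl⟩
    have : j ≤ 3 ^ n - 1 := by omega
    exact ⟨by exact_mod_cast h0, by exact_mod_cast this⟩
  have hone : (1 : ℝ) ∈ S := ⟨1, one_mem_reducedNumerators hn, Int.cast_one⟩
  have htop : (3 ^ n - 1 : ℝ) ∈ S :=
    ⟨3 ^ n - 1, three_pow_sub_one_mem_reducedNumerators hn, by push_cast; rfl⟩
  have hleft : IsAffineOn (infDist · S) (Iic 1) :=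
    infDist_isAffineOn_Iic hone fun s hs => (hbounds s hs).1
  have hright : IsAffineOn (infDist · S) (Ici (3 ^ n - 1)) :=
    infDist_isAffineOn_Ici htop fun s hs => (hbounds s hs).2
  have hpos : (0 : ℝ) < 3 ^ n := by positivity
  rw [funext (lowerEnvelope_eq_infDist hn)]
  refine piecewiseAffineWith_of_isAffineOn (c := fun i : ℕ => (i : ℝ) / (2 * 3 ^ n))
    (fun i j hij => by dsimp only; gcongr) _ ?_ ?_ fun i _ => ?_
  · refine hleft.comp_mul_left _ fun y hy => ?_
    simp only [CharP.cast_eq_zero, zero_div, mem_Iic] at hy ⊢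
    nlinarith
  · refine hright.comp_mul_left _ fun y hy => ?_
    rw [mem_Ici, div_le_iff₀ (by positivity)] at hy
    push_cast at hy
    simp only [mem_Ici]
    nlinarith
  · refine (infDist_isAffineOn_halfCell (finite_reducedNumerators n) ⟨1, hone⟩
      (image_subset_range _ _) i).comp_mul_left _ fun y ⟨hy₁, hy₂⟩ => ⟨?_, ?_⟩
    · rw [div_le_iff₀ (by positivity)] at hy₁
      push_cast
      linarith
    · rw [le_div_iff₀ (by positivity)] at hy₂
      push_cast at hy₂ ⊢
      linarith

lemma lowerEnvelope_isStrictLocalMin {n : ℕ} (hn : 1 ≤ n) {j : ℤ}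
    (hj : j ∈ reducedNumerators n) : IsStrictLocalMin (lowerEnvelope n) (j / 3 ^ n) := by
  set S : Set ℝ := (↑) '' reducedNumerators n
  have hpos : (0 : ℝ) < 3 ^ n := by positivity
  have hzero : ∀ y, lowerEnvelope n y = 0 ↔ 3 ^ n * y ∈ S := fun y => by
    rw [lowerEnvelope_eq_infDist hn, ← (finite_reducedNumerators n).isClosed.mem_iff_infDist_zero
      (image_reducedNumerators_nonempty hn)]
  refine isStrictLocalMin_of_finite_zeros (fun y => ?_) ?_ ((hzero _).mpr ?_)
  · rw [lowerEnvelope_eq_infDist hn]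
    exact infDist_nonneg
  · exact ((finite_reducedNumerators n).preimage (mul_right_injective₀ hpos.ne').injOn).subset
      fun y hy => (hzero y).mp hy
  · rw [mul_div_cancel₀ _ hpos.ne']
    exact mem_image_of_mem _ hj

lemma two_mul_three_pow_lt_of_piecewiseAffineWith_lowerEnvelope {n k : ℕ} (hn : 1 ≤ n)
    (hk : PiecewiseAffineWith (lowerEnvelope n) k) : 2 * 3 ^ (n - 1) < k := by
  let zeroAt : ℕ → ℝ := fun i => ((i + i / 2 + 1 : ℕ) : ℝ) / 3 ^ n
  have hinj : Function.Injective zeroAt := fun i i' h => by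
    have : i + i / 2 + 1 = i' + i' / 2 + 1 := by
      exact_mod_cast (div_left_inj' (by positivity)).mp h
    omega
  have := hk.card_lt ((Finset.range (2 * 3 ^ (n - 1))).image zeroAt) fun z hz => by
    obtain ⟨i, hi, rfl⟩ := Finset.mem_image.mp hz
    have := lowerEnvelope_isStrictLocalMin hn
      (natCast_mem_reducedNumerators hn (Finset.mem_range.mp hi))
    rwa [Int.cast_natCast] at this
  rwa [Finset.card_image_of_injective _ hinj, Finset.card_range] at this

/-- the lower envelope `E_n` of the `2ⁿ` compositions of
`f₀ x = |3x - 1|` and `f₁ x = |3x - 2|` is piecewise linear with at least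
`2ⁿ` pieces, i.e. `p(E_n) ≥ 2 ^ n`. -/
theorem lowerEnvelope_pieces_ge (n : ℕ) (hn : 1 ≤ n) :
    (∃ k : ℕ, PiecewiseAffineWith (lowerEnvelope n) k) ∧
    2 ^ n ≤ nPieces (lowerEnvelope n) := by
  have hpw := lowerEnvelope_piecewiseAffineWith hn
  refine ⟨⟨_, hpw⟩, le_csInf ⟨_, hpw⟩ fun k hk => ?_⟩
  calc 2 ^ n = 2 * 2 ^ (n - 1) := by rw [← pow_succ', Nat.sub_add_cancel hn]
    _ ≤ 2 * 3 ^ (n - 1) := by gcongr; norm_num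
    _ ≤ k := (two_mul_three_pow_lt_of_piecewiseAffineWith_lowerEnvelope hn hk).le
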